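/- arXiv:2408.17441 — 4 statements merged into one kernel-verified Lean document; each statement's English description precedes it below -/
import Mathlib

section
/- Let $a \in \mathbb{Q}^\times$, let $k \in \mathbb{N}$ be odd, and let $K = \mathbb{Q}(\mu_k, a^{1/k}) \subseteq \mathbb{C}$ for a fixed $k$-th root $a^{1/k}$ of $a$. Then the maximal subextension of $K/\mathbb{Q}$ that is abelian over $\mathbb{Q}$ equals $\mathbb{Q}(\mu_k)$. -/
/-- The cyclotomic field `ℚ(μ_m)` inside `ℂ`. -/
noncomputable def cycField (m : ℕ) : IntermediateField ℚ ℂ :=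
  IntermediateField.adjoin ℚ {x : ℂ | x ^ m = 1}

/-- `Kab` is the maximal subextension of `K/ℚ` that is abelian over `ℚ`. -/
def IsMaxAbelianSubext (K Kab : IntermediateField ℚ ℂ) : Prop :=
  Kab ≤ K ∧ IsGalois ℚ Kab ∧ (∀ σ τ : Kab ≃ₐ[ℚ] Kab, σ * τ = τ * σ) ∧
    ∀ F : IntermediateField ℚ ℂ, F ≤ K → IsGalois ℚ F →
      (∀ σ τ : F ≃ₐ[ℚ] F, σ * τ = τ * σ) → F ≤ Kab

open IntermediateField Polynomial

/-- Two algebra homomorphisms agreeing on a generating set are equal. -/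
theorem algHom_ext_of_adjoin_eq_top {F E E' : Type*} [Field F] [Field E] [Field E']
    [Algebra F E] [Algebra F E'] {s : Set E}
    (hs : IntermediateField.adjoin F s = ⊤) {f g : E →ₐ[F] E'}
    (h : ∀ x ∈ s, f x = g x) : f = g := by
  ext x
  have hx : x ∈ IntermediateField.adjoin F s := hs ▸ IntermediateField.mem_top
  refine IntermediateField.adjoin_induction F
    (fun y hy => h y hy)
    (fun r => (f.commutes r).trans (g.commutes r).symm)
    (fun y z _ _ hfy hfz => by rw [map_add, map_add, hfy, hfz])
    (fun y _ hfy => by rw [map_inv₀, map_inv₀, hfy])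
    (fun y z _ _ hfy hfz => by rw [map_mul, map_mul, hfy, hfz]) hx

theorem algEquiv_ext_of_adjoin_eq_top {F E : Type*} [Field F] [Field E]
    [Algebra F E] {s : Set E}
    (hs : IntermediateField.adjoin F s = ⊤) {f g : E ≃ₐ[F] E}
    (h : ∀ x ∈ s, f x = g x) : f = g := by
  have := algHom_ext_of_adjoin_eq_top hs (f := f.toAlgHom) (g := g.toAlgHom) h
  exact AlgEquiv.ext fun x => DFunLike.congr_fun this x

set_option maxHeartbeats 2000000
set_option synthInstance.maxHeartbeats 200000

/-- For `a ∈ ℚ^×` and odd `k`, the maximal abelian subextension of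
`K = ℚ(μ_k, a^{1/k})` over `ℚ` is `ℚ(μ_k)`. -/
theorem stmt_3 (a : ℚ) (ha : a ≠ 0) (k : ℕ) (hk : 0 < k) (hodd : Odd k)
    (α : ℂ) (hα : α ^ k = (a : ℂ))
    (K : IntermediateField ℚ ℂ)
    (hK : K = cycField k ⊔ IntermediateField.adjoin ℚ {α}) :
    IsMaxAbelianSubext K (cycField k) := by
  haveI : NeZero k := ⟨hk.ne'⟩
  set ζ : ℂ := Complex.exp (2 * Real.pi * Complex.I / k) with hζdef
  have hζ : IsPrimitiveRoot ζ k := Complex.isPrimitiveRoot_exp k hk.ne'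
  have hζk : ζ ^ k = 1 := hζ.pow_eq_one
  have haC : (a : ℂ) ≠ 0 := by exact_mod_cast ha
  have hα0 : α ≠ 0 := by
    intro h
    rw [h, zero_pow hk.ne'] at hα
    exact haC hα.symm
  -- `cycField k = ℚ(ζ)`
  have hcyc : cycField k = IntermediateField.adjoin ℚ {ζ} := by
    apply le_antisymm
    · rw [cycField, adjoin_le_iff]
      rintro x hx
      obtain ⟨i, -, rfl⟩ := hζ.eq_pow_of_pow_eq_one hx
      exact pow_mem (subset_adjoin ℚ ({ζ} : Set ℂ) rfl) i
    · rw [adjoin_le_iff, Set.singleton_subset_iff]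
      exact subset_adjoin ℚ {x : ℂ | x ^ k = 1} hζk
  have hζcyc : ζ ∈ cycField k := subset_adjoin ℚ {x : ℂ | x ^ k = 1} hζk
  -- `K = ℚ(ζ, α)`
  have hKadj : K = IntermediateField.adjoin ℚ {ζ, α} := by
    rw [hK, hcyc, ← Set.singleton_union, adjoin_union]
  have hζK : ζ ∈ K := hKadj ▸ subset_adjoin ℚ ({ζ, α} : Set ℂ) (Set.mem_insert _ _)
  have hαK : α ∈ K := hKadj ▸ subset_adjoin ℚ ({ζ, α} : Set ℂ) (Set.mem_insert_of_mem _ rfl)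
  -- `K` is the splitting field of `X^k - a`
  have hroot : ((X : ℚ[X]) ^ k - C a).rootSet ℂ = {x : ℂ | x ^ k = (a : ℂ)} := by
    ext x
    rw [mem_rootSet, Set.mem_setOf_eq, and_iff_right (X_pow_sub_C_ne_zero hk _)]
    simp [sub_eq_zero]
  have hKroots : K = IntermediateField.adjoin ℚ (((X : ℚ[X]) ^ k - C a).rootSet ℂ) := by
    rw [hroot, hKadj]
    apply le_antisymm
    · rw [adjoin_le_iff]
      rintro x (rfl | rfl)
      · have h1 : ζ * α ∈ {x : ℂ | x ^ k = (a : ℂ)} := by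
          simp only [Set.mem_setOf_eq, mul_pow, hζk, hα, one_mul]
        have h2 : α ∈ {x : ℂ | x ^ k = (a : ℂ)} := hα
        have : ζ = (ζ * α) * α⁻¹ := by field_simp
        rw [this]
        exact mul_mem (subset_adjoin ℚ {x : ℂ | x ^ k = (a : ℂ)} h1) (inv_mem (subset_adjoin ℚ {x : ℂ | x ^ k = (a : ℂ)} h2))
      · exact subset_adjoin ℚ {x : ℂ | x ^ k = (a : ℂ)} hα
    · rw [adjoin_le_iff]
      rintro x hx
      have hx' : (x / α) ^ k = 1 := by
        rw [div_pow, hx, hα, div_self haC]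
      obtain ⟨i, -, hi⟩ := hζ.eq_pow_of_pow_eq_one hx'
      have : x = ζ ^ i * α := by
        rw [hi, div_mul_cancel₀ _ hα0]
      rw [this]
      exact mul_mem (pow_mem (subset_adjoin ℚ ({ζ, α} : Set ℂ) (Set.mem_insert _ _)) i)
        (subset_adjoin ℚ ({ζ, α} : Set ℂ) (Set.mem_insert_of_mem _ rfl))
  haveI hsplitK : IsSplittingField ℚ K ((X : ℚ[X]) ^ k - C a) := by
    rw [hKroots]
    exact adjoin_rootSet_isSplittingField (IsAlgClosed.splits _)
  haveI : FiniteDimensional ℚ K := IsSplittingField.finiteDimensional K ((X : ℚ[X]) ^ k - C a)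
  haveI : Normal ℚ K := Normal.of_isSplittingField ((X : ℚ[X]) ^ k - C a)
  haveI : IsGalois ℚ K := ⟨⟩
  -- `cycField k` is the splitting field of `X^k - 1`
  have hroot1 : ((X : ℚ[X]) ^ k - C 1).rootSet ℂ = {x : ℂ | x ^ k = 1} := by
    ext x
    rw [mem_rootSet, Set.mem_setOf_eq, and_iff_right (X_pow_sub_C_ne_zero hk _)]
    simp [sub_eq_zero]
  haveI hsplitL : IsSplittingField ℚ (cycField k) ((X : ℚ[X]) ^ k - C 1) := by
    rw [show cycField k = IntermediateField.adjoin ℚ (((X : ℚ[X]) ^ k - C 1).rootSet ℂ) by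
      rw [hroot1]; rfl]
    exact adjoin_rootSet_isSplittingField (IsAlgClosed.splits _)
  haveI : FiniteDimensional ℚ (cycField k) :=
    IsSplittingField.finiteDimensional (cycField k) ((X : ℚ[X]) ^ k - C 1)
  haveI : Normal ℚ (cycField k) := Normal.of_isSplittingField ((X : ℚ[X]) ^ k - C 1)
  haveI : IsGalois ℚ (cycField k) := ⟨⟩
  -- generators as subtypes
  set ζ' : K := ⟨ζ, hζK⟩ with hζ'def
  set α' : K := ⟨α, hαK⟩ with hα'def
  have hgen : IntermediateField.adjoin ℚ {ζ', α'} = (⊤ : IntermediateField ℚ K) := by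
    apply lift_injective K
    erw [lift_adjoin, lift_top, Set.image_insert_eq, Set.image_singleton, ← hKadj]
  set ζc : cycField k := ⟨ζ, hζcyc⟩ with hζcdef
  have hgenc : IntermediateField.adjoin ℚ {ζc} =
      (⊤ : IntermediateField ℚ (cycField k)) := by
    apply lift_injective (cycField k)
    erw [lift_adjoin, lift_top, Set.image_singleton, ← hcyc]
  -- every automorphism sends a `k`-th root of unity to some power of `ζ`
  have hrhou : ∀ {E : IntermediateField ℚ ℂ} (z : E) (_ : (z : ℂ) = ζ)
      (ρ : E ≃ₐ[ℚ] E), ∃ i : ℕ, ρ z = z ^ i := by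
    intro E z hz ρ
    have hzk : z ^ k = 1 := by
      ext
      push_cast [hz]
      exact hζk
    have h1 : ((ρ z : E) : ℂ) ^ k = 1 := by
      have : (ρ z) ^ k = 1 := by rw [← map_pow, hzk, map_one]
      exact_mod_cast congrArg Subtype.val this
    obtain ⟨i, -, hi⟩ := hζ.eq_pow_of_pow_eq_one h1
    refine ⟨i, ?_⟩
    ext
    push_cast [hz]
    exact hi.symm
  refine ⟨hK ▸ le_sup_left, inferInstance, ?_, ?_⟩
  · -- Gal(ℚ(μ_k)/ℚ) is abelian
    intro σ τ
    obtain ⟨i, hi⟩ := hrhou ζc rfl σ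
    obtain ⟨j, hj⟩ := hrhou ζc rfl τ
    apply algEquiv_ext_of_adjoin_eq_top hgenc
    rintro x rfl
    simp only [AlgEquiv.mul_apply, hi, hj, map_pow, ← pow_mul, mul_comm]
  · -- maximality
    intro F hFK hFGal hFab
    haveI := hFGal
    -- construct σ with σ ζ' = ζ'^2
    have hcop : Nat.Coprime 2 k := Nat.coprime_two_left.mpr hodd
    have hζ2 : IsPrimitiveRoot (ζ ^ 2) k := hζ.pow_of_coprime 2 hcop
    have hmin : minpoly ℚ ζ' = minpoly ℚ (ζ' ^ 2) := by
      have e1 : minpoly ℚ (K.val ζ') = minpoly ℚ ζ' :=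
        minpoly.algHom_eq K.val (fun _ _ h => Subtype.ext h) ζ'
      have e2 : minpoly ℚ (K.val (ζ' ^ 2)) = minpoly ℚ (ζ' ^ 2) :=
        minpoly.algHom_eq K.val (fun _ _ h => Subtype.ext h) (ζ' ^ 2)
      have e3 : (K.val ζ' : ℂ) = ζ := rfl
      have e4 : (K.val (ζ' ^ 2) : ℂ) = ζ ^ 2 := rfl
      rw [← e1, ← e2, e3, e4, ← cyclotomic_eq_minpoly_rat hζ hk,
        ← cyclotomic_eq_minpoly_rat hζ2 hk]
    obtain ⟨σ, hσζ⟩ : ∃ σ : K ≃ₐ[ℚ] K, σ ζ' = ζ' ^ 2 := by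
      apply minpoly.exists_algEquiv_of_root' (x := ζ' ^ 2)
        (IsIntegral.isAlgebraic (IsIntegral.of_finite ℚ ζ'))
      rw [hmin]
      exact minpoly.aeval ℚ (ζ' ^ 2)
    -- every automorphism sends α' to ζ'^c * α'
    have hαpow : ∀ ρ : K ≃ₐ[ℚ] K, ∃ c : ℕ, ρ α' = ζ' ^ c * α' := by
      intro ρ
      have hαk : α' ^ k = algebraMap ℚ K a := by
        ext
        push_cast
        exact hα
      have h1 : ((ρ α' : K) : ℂ) ^ k = (a : ℂ) := by
        have : (ρ α') ^ k = algebraMap ℚ K a := by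
          rw [← map_pow, hαk, AlgEquiv.commutes]
        have h2 := congrArg Subtype.val this
        push_cast at h2
        exact_mod_cast h2
      have h2 : (((ρ α' : K) : ℂ) / α) ^ k = 1 := by
        rw [div_pow, h1, hα, div_self haC]
      obtain ⟨c, -, hc⟩ := hζ.eq_pow_of_pow_eq_one h2
      refine ⟨c, ?_⟩
      ext
      push_cast
      rw [hc, div_mul_cancel₀ _ hα0]
    obtain ⟨c, hσα⟩ := hαpow σ
    -- restriction of automorphisms of K to F
    set Fr : IntermediateField ℚ K := IntermediateField.restrict hFK with hFrdef
    have e : F ≃ₐ[ℚ] ↥Fr := IntermediateField.restrict_algEquiv hFK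
    haveI : Normal ℚ ↥Fr := Normal.of_algEquiv e
    have hFrab : ∀ σ' τ' : ↥Fr ≃ₐ[ℚ] ↥Fr, σ' * τ' = τ' * σ' := by
      intro σ' τ'
      let m := AlgEquiv.autCongr (R := ℚ) e
      have := hFab (m.symm σ') (m.symm τ')
      calc σ' * τ' = m (m.symm σ') * m (m.symm τ') := by rw [m.apply_symm_apply, m.apply_symm_apply]
        _ = m (m.symm σ' * m.symm τ') := (map_mul m _ _).symm
        _ = m (m.symm τ' * m.symm σ') := by rw [this]
        _ = τ' * σ' := by rw [map_mul m, m.apply_symm_apply, m.apply_symm_apply]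
    set r : (↥K ≃ₐ[ℚ] ↥K) →* (↥Fr ≃ₐ[ℚ] ↥Fr) := AlgEquiv.restrictNormalHom (↥Fr) with hrdef
    -- main claim: elements of F are fixed by Gal(K/ℚ(ζ))
    intro x hxF
    have hxK : x ∈ K := hFK hxF
    set x' : K := ⟨x, hxK⟩ with hx'def
    set L' : IntermediateField ℚ K := IntermediateField.adjoin ℚ {ζ'} with hL'def
    have hζL' : ζ' ∈ L' := subset_adjoin ℚ ({ζ'} : Set K) rfl
    have hxL' : x' ∈ L' := by
      rw [← IsGalois.fixedField_fixingSubgroup L']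
      rintro ⟨τ, hτ⟩
      show τ x' = x'
      -- τ fixes ζ'
      have hτζ : τ ζ' = ζ' := ((mem_fixingSubgroup_iff L' τ).mp hτ) ζ' hζL'
      obtain ⟨j, hτα⟩ := hαpow τ
      -- the commutation relation σ τ = τ τ σ
      have hrel : σ * τ = τ * (τ * σ) := by
        apply algEquiv_ext_of_adjoin_eq_top hgen
        rintro y (rfl | rfl)
        · simp only [AlgEquiv.mul_apply, hτζ, hσζ, map_pow]
        · simp only [AlgEquiv.mul_apply, hτα, hσα, map_mul, map_pow, hτζ, hσζ]
          ring
      -- restrict to Fr and use commutativity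
      have h2 := congrArg r hrel
      rw [map_mul, map_mul, map_mul, hFrab (r σ) (r τ), ← mul_assoc] at h2
      have h3 : r τ = r τ * r τ := mul_right_cancel h2
      have h4 : r τ = 1 := by
        have : r τ * (1 : ↥Fr ≃ₐ[ℚ] ↥Fr) = r τ * r τ := by rw [mul_one, ← h3]
        exact (mul_left_cancel this).symm
      -- conclude that τ fixes x'
      have hxFr : x' ∈ Fr := (IntermediateField.mem_restrict hFK x').mpr hxF
      have h5 := @AlgEquiv.restrictNormalHom_apply _ _ _ _ _ Fr this τ ⟨x', hxFr⟩
      erw [← hrdef, h4] at h5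
      exact h5.symm
    -- transfer back to ℂ
    have : x ∈ lift L' := (mem_lift x').mpr hxL'
    erw [hL'def, lift_adjoin, Set.image_singleton, ← hcyc] at this
    exact this
end

section
/- Let $K$ be a number field of degree $D$ over $\mathbb{Q}$, let $\mathfrak{c}$ be a nonzero ideal of $\mathcal{O}_K$, and let $a, b \in \mathfrak{c}$ with $b \neq 0$. Write the field norm $N_{K/\mathbb{Q}}(a + bx) = \sum_{i=0}^D a_i x^i$ as a polynomial in $x$ of degree $D$. Then each coefficient $a_i$ is a rational integer divisible by the absolute norm $\mathfrak{N}(\mathfrak{c})$ of $\mathfrak{c}$. -/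
open NumberField

/-- Let `K` be a number field, `c` a nonzero ideal of `𝓞 K` and `a, b ∈ c` with `b ≠ 0`.
If `Q ∈ ℚ[x]` is the polynomial with `Q(x) = N_{K/ℚ}(a + bx)`, then every coefficient of `Q`
is a rational integer divisible by the absolute norm of `c`. -/
theorem stmt_6 (K : Type*) [Field K] [NumberField K]
    (c : Ideal (𝓞 K)) (hc : c ≠ ⊥)
    (a b : 𝓞 K) (hac : a ∈ c) (hbc : b ∈ c) (hb : b ≠ 0)
    (Q : Polynomial ℚ)
    (hQ : ∀ r : ℚ, Q.eval r = Algebra.norm ℚ ((a : K) + (b : K) * (algebraMap ℚ K r))) :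
    ∀ i : ℕ, ∃ m : ℤ, Q.coeff i = (m : ℚ) ∧ (Ideal.absNorm c : ℤ) ∣ m := by
  classical
  set ι := Module.Free.ChooseBasisIndex ℤ (𝓞 K) with hι
  let bZ : Module.Basis ι ℤ (𝓞 K) := NumberField.RingOfIntegers.basis K
  let bI : Module.Basis ι ℤ c := Ideal.selfBasis bZ c hc
  let bK : Module.Basis ι ℚ K := NumberField.integralBasis K
  let M : Matrix ι ι ℤ := bZ.toMatrix ((↑) ∘ bI)
  let A : Matrix ι ι ℤ := Matrix.of fun i j => bI.repr ⟨a * bZ j, Ideal.mul_mem_right _ c hac⟩ i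
  let B : Matrix ι ι ℤ := Matrix.of fun i j => bI.repr ⟨b * bZ j, Ideal.mul_mem_right _ c hbc⟩ i
  let bIK : ι → K := fun i => algebraMap (𝓞 K) K ((bI i : c) : 𝓞 K)
  have hdetM : M.det.natAbs = Ideal.absNorm c := by
    have := Ideal.natAbs_det_basis_change bZ c bI
    rwa [Module.Basis.det_apply] at this
  have hA : ∀ j, a * bZ j = ∑ i, A i j • ((bI i : c) : 𝓞 K) := by
    intro j
    have h := congrArg (Subtype.val) (bI.sum_repr ⟨a * bZ j, Ideal.mul_mem_right _ c hac⟩)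
    simp only [Submodule.coe_sum, Submodule.coe_smul_of_tower] at h
    exact h.symm
  have hB : ∀ j, b * bZ j = ∑ i, B i j • ((bI i : c) : 𝓞 K) := by
    intro j
    have h := congrArg (Subtype.val) (bI.sum_repr ⟨b * bZ j, Ideal.mul_mem_right _ c hbc⟩)
    simp only [Submodule.coe_sum, Submodule.coe_smul_of_tower] at h
    exact h.symm
  have hM : ∀ i, ((bI i : c) : 𝓞 K) = ∑ k, M k i • bZ k := by
    intro i
    exact (bZ.sum_toMatrix_smul_self ((↑) ∘ bI) i).symm
  have hMK : ∀ i, bIK i = ∑ k, (M k i : ℚ) • bK k := by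
    intro i
    rw [show bIK i = algebraMap (𝓞 K) K ((bI i : c) : 𝓞 K) from rfl, hM i, map_sum]
    refine Finset.sum_congr rfl fun k _ => ?_
    rw [map_zsmul, ← Int.cast_smul_eq_zsmul ℚ, integralBasis_apply]
  have hAK : ∀ j, algebraMap (𝓞 K) K (a * bZ j) = ∑ i, (A i j : ℚ) • bIK i := by
    intro j
    rw [hA j, map_sum]
    exact Finset.sum_congr rfl fun i _ => by rw [map_zsmul, ← Int.cast_smul_eq_zsmul ℚ]
  have hBK : ∀ j, algebraMap (𝓞 K) K (b * bZ j) = ∑ i, (B i j : ℚ) • bIK i := by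
    intro j
    rw [hB j, map_sum]
    exact Finset.sum_congr rfl fun i _ => by rw [map_zsmul, ← Int.cast_smul_eq_zsmul ℚ]
  have key : ∀ r : ℚ,
      Algebra.leftMulMatrix bK ((a : K) + (b : K) * algebraMap ℚ K r)
        = (M.map (Int.cast : ℤ → ℚ)) * (A.map (Int.cast : ℤ → ℚ)
            + r • B.map (Int.cast : ℤ → ℚ)) := by
    intro r
    ext k j
    rw [Algebra.leftMulMatrix_eq_repr_mul]
    have hbKj : bK j = algebraMap (𝓞 K) K (bZ j) := integralBasis_apply K j
    have h1 : ((a : K) + (b : K) * algebraMap ℚ K r) * bK j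
        = algebraMap (𝓞 K) K (a * bZ j) + r • algebraMap (𝓞 K) K (b * bZ j) := by
      rw [hbKj]
      simp only [map_mul, Algebra.smul_def]
      ring
    have h2 : ((a : K) + (b : K) * algebraMap ℚ K r) * bK j
        = ∑ k', (∑ i, ((M k' i : ℚ) * ((A i j : ℚ) + r * (B i j : ℚ)))) • bK k' := by
      rw [h1, hAK j, hBK j, Finset.smul_sum, ← Finset.sum_add_distrib]
      have e1 : ∀ i, (A i j : ℚ) • bIK i + r • ((B i j : ℚ) • bIK i)
          = ((A i j : ℚ) + r * (B i j : ℚ)) • bIK i := by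
        intro i; rw [add_smul, smul_smul]
      rw [Finset.sum_congr rfl fun i _ => e1 i]
      have e2 : ∀ i, ((A i j : ℚ) + r * (B i j : ℚ)) • bIK i
          = ∑ k', ((M k' i : ℚ) * ((A i j : ℚ) + r * (B i j : ℚ))) • bK k' := by
        intro i
        rw [hMK i, Finset.smul_sum]
        exact Finset.sum_congr rfl fun k' _ => by rw [smul_smul, mul_comm]
      rw [Finset.sum_congr rfl fun i _ => e2 i, Finset.sum_comm]
      exact Finset.sum_congr rfl fun y _ => Finset.sum_smul.symm
    rw [h2, map_sum]
    simp only [map_smul, Finsupp.coe_finset_sum, Finsupp.coe_smul, Finset.sum_apply,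
      Pi.smul_apply, Module.Basis.repr_self, smul_eq_mul]
    rw [Finset.sum_eq_single k]
    · simp [M, A, B, Matrix.mul_apply, Finsupp.single_apply, Matrix.map_apply, mul_add]
    · intro k' _ hk'; simp [Finsupp.single_apply, hk']
    · intro h; exact absurd (Finset.mem_univ k) h
  -- the integer polynomial
  let P : Polynomial ℤ :=
    (Matrix.of fun i j => (Polynomial.C (A i j) + Polynomial.X * Polynomial.C (B i j))).det
  have hPeval : ∀ r : ℚ, ((P.map (Int.castRingHom ℚ)).eval r)
      = (A.map (Int.cast : ℤ → ℚ) + r • B.map (Int.cast : ℤ → ℚ)).det := by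
    intro r
    rw [← Polynomial.eval₂_eq_eval_map]
    have hdet := RingHom.map_det (Polynomial.eval₂RingHom (Int.castRingHom ℚ) r)
      (Matrix.of fun i j => (Polynomial.C (A i j) + Polynomial.X * Polynomial.C (B i j)))
    rw [show Polynomial.eval₂ (Int.castRingHom ℚ) r P
      = (Polynomial.eval₂RingHom (Int.castRingHom ℚ) r) P from rfl, hdet]
    congr 1
    ext i j
    simp only [RingHom.mapMatrix_apply, Matrix.map_apply, Matrix.of_apply,
      Polynomial.coe_eval₂RingHom, Polynomial.eval₂_add, Polynomial.eval₂_mul,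
      Polynomial.eval₂_C, Polynomial.eval₂_X, Matrix.add_apply, Matrix.smul_apply,
      smul_eq_mul, Int.coe_castRingHom]
  have hQeq : Q = Polynomial.C ((M.det : ℤ) : ℚ) * (P.map (Int.castRingHom ℚ)) := by
    apply Polynomial.funext
    intro r
    rw [hQ r, Polynomial.eval_mul, Polynomial.eval_C, hPeval r]
    rw [Algebra.norm_eq_matrix_det bK, key r, Matrix.det_mul]
    congr 1
    rw [show (M.map (Int.cast : ℤ → ℚ)) = (Int.castRingHom ℚ).mapMatrix M from rfl,
      ← RingHom.map_det]
    rfl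
  intro i
  refine ⟨M.det * P.coeff i, ?_, ?_⟩
  · rw [hQeq, Polynomial.coeff_C_mul, Polynomial.coeff_map]
    push_cast
    rfl
  · exact Dvd.dvd.mul_right (by rw [← hdetM]; exact Int.natAbs_dvd.mpr dvd_rfl) _
end

section
/- Let $n \geq 2$ be an integer and let $D \in \mathbb{N}$ be divisible by $n(n-1)$. Then there exist integers $s, t$ with $\gcd(st, D) = 1$ such that $(-1)^{n-1} t \equiv 1 \pmod{n}$, $-s \equiv 1 \pmod{n-1}$, and $(n-1)^{n-1} t - n^n s \equiv 1 \pmod{D}$. -/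
private lemma auxIsUnit {m : ℕ} {a : ℤ} (h : IsCoprime a (m : ℤ)) :
    IsUnit ((a : ℤ) : ZMod m) := by
  obtain ⟨u, v, huv⟩ := h
  refine IsUnit.of_mul_eq_one ((u : ℤ) : ZMod m) ?_
  have h2 : ((u * a + v * m : ℤ) : ZMod m) = ((1 : ℤ) : ZMod m) := by rw [huv]
  push_cast at h2
  rw [ZMod.natCast_self] at h2
  linear_combination h2

private lemma auxUnitPow {p : ℕ} (hp : p.Prime) (e : ℕ) {x : ℤ} (h : ¬ (p : ℤ) ∣ x) :
    IsUnit ((x : ℤ) : ZMod (p ^ e)) := by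
  apply auxIsUnit
  have hpz : Prime (p : ℤ) := Int.prime_iff_natAbs_prime.mpr (by simpa using hp)
  have hc : IsCoprime x ((p : ℤ) ^ e) := ((hpz.coprime_iff_not_dvd).mpr h).symm.pow_right
  rwa [show ((p ^ e : ℕ) : ℤ) = (p : ℤ) ^ e by push_cast; ring]

private lemma auxKey (A B : ℤ) (hco : IsCoprime A B) (h2 : (2 : ℤ) ∣ A * B) (D : ℕ) :
    1 ≤ D → ∃ T S : ZMod D, IsUnit T ∧ IsUnit S ∧
      (A : ZMod D) * T - (B : ZMod D) * S = 1 := by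
  induction D using Nat.recOnPosPrimePosCoprime with
  | prime_pow p e hp he =>
    intro _
    have hp' : Nat.Prime p := hp
    have hpz : Prime (p : ℤ) := Int.prime_iff_natAbs_prime.mpr (by simpa using hp')
    by_cases hA : (p : ℤ) ∣ A
    · have hB : ¬ (p : ℤ) ∣ B := fun hB =>
        hpz.not_unit (hco.isUnit_of_dvd' hA hB)
      obtain ⟨u, hu⟩ := auxUnitPow hp' e hB
      have hA1 : ¬ (p : ℤ) ∣ (A - 1) := fun hdvd =>
        hpz.not_dvd_one (by simpa using dvd_sub hA hdvd)
      have hU : IsUnit ((A : ZMod (p ^ e)) - 1) := by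
        have := auxUnitPow hp' e hA1
        push_cast at this
        exact this
      refine ⟨1, ↑u⁻¹ * ((A : ZMod (p ^ e)) - 1), isUnit_one, (Units.isUnit _).mul hU, ?_⟩
      rw [← hu, mul_one, Units.mul_inv_cancel_left]
      ring
    · obtain ⟨u, hu⟩ := auxUnitPow hp' e hA
      by_cases hB : (p : ℤ) ∣ B
      · have h1B : ¬ (p : ℤ) ∣ (1 + B) := fun hdvd =>
          hpz.not_dvd_one (by simpa using dvd_sub hdvd hB)
        have hU : IsUnit ((1 : ZMod (p ^ e)) + (B : ZMod (p ^ e))) := by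
          have := auxUnitPow hp' e h1B
          push_cast at this
          exact this
        refine ⟨↑u⁻¹ * (1 + (B : ZMod (p ^ e))), 1, (Units.isUnit _).mul hU, isUnit_one, ?_⟩
        rw [← hu, mul_one, Units.mul_inv_cancel_left]
        ring
      · obtain ⟨w, hw⟩ := auxUnitPow hp' e hB
        have hp2 : ¬ (p : ℤ) ∣ 2 := fun hdvd =>
          (hpz.dvd_or_dvd (hdvd.trans h2)).elim hA hB
        have hU2 : IsUnit ((2 : ZMod (p ^ e))) := by
          have := auxUnitPow hp' e hp2
          push_cast at this
          exact this
        refine ⟨↑u⁻¹ * 2, ↑w⁻¹, (Units.isUnit _).mul hU2, Units.isUnit _, ?_⟩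
        rw [← hu, ← hw, Units.mul_inv_cancel_left, Units.mul_inv]
        ring
  | zero => intro h; omega
  | one =>
    intro _
    exact ⟨1, 1, isUnit_one, isUnit_one, Subsingleton.elim _ _⟩
  | coprime a b ha hb hab iha ihb =>
    intro _
    obtain ⟨T1, S1, hT1, hS1, he1⟩ := iha (by omega)
    obtain ⟨T2, S2, hT2, hS2, he2⟩ := ihb (by omega)
    let E : ZMod a × ZMod b ≃+* ZMod (a * b) := (ZMod.chineseRemainder hab).symm
    refine ⟨E (T1, T2), E (S1, S2), ?_, ?_, ?_⟩
    · obtain ⟨u1, hu1⟩ := hT1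
      obtain ⟨u2, hu2⟩ := hT2
      refine (IsUnit.of_mul_eq_one (a := (T1, T2)) (↑u1⁻¹, ↑u2⁻¹) ?_).map E
      rw [Prod.mk_mul_mk, ← hu1, ← hu2]
      simp [Prod.ext_iff]
    · obtain ⟨u1, hu1⟩ := hS1
      obtain ⟨u2, hu2⟩ := hS2
      refine (IsUnit.of_mul_eq_one (a := (S1, S2)) (↑u1⁻¹, ↑u2⁻¹) ?_).map E
      rw [Prod.mk_mul_mk, ← hu1, ← hu2]
      simp [Prod.ext_iff]
    · have hA : (A : ZMod (a * b)) = E ((A : ℤ) : ZMod a × ZMod b) :=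
        (map_intCast (E : ZMod a × ZMod b →+* ZMod (a * b)) A).symm
      have hB : (B : ZMod (a * b)) = E ((B : ℤ) : ZMod a × ZMod b) :=
        (map_intCast (E : ZMod a × ZMod b →+* ZMod (a * b)) B).symm
      rw [hA, hB, ← map_mul, ← map_mul, ← map_sub]
      have hprod : ((A : ℤ) : ZMod a × ZMod b) * (T1, T2) - ((B : ℤ) : ZMod a × ZMod b) * (S1, S2)
          = 1 := by
        refine Prod.ext ?_ ?_ <;> simp [he1, he2]
      rw [hprod, map_one]

/-- For `n ≥ 2` and `D` divisible by `n(n-1)`, there are integers `s, t` with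
`gcd(st, D) = 1`, `(-1)^{n-1} t ≡ 1 (mod n)`, `-s ≡ 1 (mod n-1)` and
`(n-1)^{n-1} t - n^n s ≡ 1 (mod D)`. -/
theorem stmt_15 (n : ℕ) (hn : 2 ≤ n) (D : ℕ) (hD : 0 < D) (hdvd : n * (n - 1) ∣ D) :
    ∃ s t : ℤ, Int.gcd (s * t) (D : ℤ) = 1 ∧
      (-1 : ℤ) ^ (n - 1) * t ≡ 1 [ZMOD (n : ℤ)] ∧
      (-s) ≡ 1 [ZMOD ((n : ℤ) - 1)] ∧
      ((n : ℤ) - 1) ^ (n - 1) * t - (n : ℤ) ^ n * s ≡ 1 [ZMOD (D : ℤ)] := by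
  haveI : NeZero D := ⟨hD.ne'⟩
  set A : ℤ := ((n : ℤ) - 1) ^ (n - 1) with hAdef
  set B : ℤ := (n : ℤ) ^ n with hBdef
  have hcop : IsCoprime ((n : ℤ) - 1) (n : ℤ) := ⟨-1, 1, by ring⟩
  have hco : IsCoprime A B := hcop.pow_left.pow_right
  have h2AB : (2 : ℤ) ∣ A * B := by
    have h1 : ((n : ℤ) - 1) ∣ A := dvd_pow_self _ (by omega)
    have h2 : (n : ℤ) ∣ B := dvd_pow_self _ (by omega)
    have h3 : (2 : ℤ) ∣ ((n : ℤ) - 1) * (n : ℤ) := by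
      have he : Even (((n : ℤ) - 1) * (((n : ℤ) - 1) + 1)) := Int.even_mul_succ_self _
      rw [sub_add_cancel] at he
      exact he.two_dvd
    exact h3.trans (mul_dvd_mul h1 h2)
  obtain ⟨T, S, hT, hS, heq⟩ := auxKey A B hco h2AB D hD
  obtain ⟨uT, huT⟩ := hT
  obtain ⟨uS, huS⟩ := hS
  have hTcast : (((T.val : ℕ) : ℤ) : ZMod D) = T := by
    push_cast
    simp [ZMod.natCast_val, ZMod.cast_id]
  have hScast : (((S.val : ℕ) : ℤ) : ZMod D) = S := by
    push_cast
    simp [ZMod.natCast_val, ZMod.cast_id]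
  have hmain : A * ((T.val : ℕ) : ℤ) - B * ((S.val : ℕ) : ℤ) ≡ 1 [ZMOD (D : ℤ)] := by
    have hc : ((A * ((T.val : ℕ) : ℤ) - B * ((S.val : ℕ) : ℤ) : ℤ) : ZMod D)
        = ((1 : ℤ) : ZMod D) := by
      rw [Int.cast_sub, Int.cast_mul, Int.cast_mul, hTcast, hScast, Int.cast_one]
      exact heq
    exact (ZMod.intCast_eq_intCast_iff _ _ _).mp hc
  refine ⟨((S.val : ℕ) : ℤ), ((T.val : ℕ) : ℤ), ?_, ?_, ?_, hmain⟩
  · have hSco : Nat.Coprime S.val D := by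
      rw [← huS]; exact ZMod.val_coe_unit_coprime uS
    have hTco : Nat.Coprime T.val D := by
      rw [← huT]; exact ZMod.val_coe_unit_coprime uT
    have hc : Nat.Coprime (S.val * T.val) D := Nat.Coprime.mul hSco hTco
    rw [show ((S.val : ℤ) * (T.val : ℤ)) = ((S.val * T.val : ℕ) : ℤ) by push_cast; ring,
      Int.gcd_natCast_natCast]
    exact hc
  · have hnD : (n : ℤ) ∣ (D : ℤ) :=
      Int.natCast_dvd_natCast.mpr ((Dvd.intro _ rfl).trans hdvd)
    have h3n := hmain.of_dvd hnD
    have e1 : ((n : ℤ) - 1) ≡ -1 [ZMOD (n : ℤ)] :=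
      Int.modEq_iff_dvd.mpr ⟨-1, by ring⟩
    have e2 : B * ((S.val : ℕ) : ℤ) ≡ 0 [ZMOD (n : ℤ)] :=
      Int.modEq_zero_iff_dvd.mpr ((dvd_pow_self _ (by omega : n ≠ 0)).mul_right _)
    have e3 : A * ((T.val : ℕ) : ℤ) ≡ (-1) ^ (n - 1) * ((T.val : ℕ) : ℤ) [ZMOD (n : ℤ)] :=
      (e1.pow (n - 1)).mul_right _
    have hfin := (e3.sub e2).symm.trans h3n
    simpa using hfin
  · have hn1 : ((n - 1 : ℕ) : ℤ) = (n : ℤ) - 1 := by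
      push_cast [Nat.cast_sub (by omega : 1 ≤ n)]; ring
    have hn1D : ((n : ℤ) - 1) ∣ (D : ℤ) := by
      rw [← hn1]
      exact Int.natCast_dvd_natCast.mpr ((Dvd.intro_left _ rfl).trans hdvd)
    have h3m := hmain.of_dvd hn1D
    have f1 : A * ((T.val : ℕ) : ℤ) ≡ 0 [ZMOD ((n : ℤ) - 1)] :=
      Int.modEq_zero_iff_dvd.mpr ((dvd_pow_self _ (by omega : n - 1 ≠ 0)).mul_right _)
    have f2 : (n : ℤ) ≡ 1 [ZMOD ((n : ℤ) - 1)] :=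
      Int.modEq_iff_dvd.mpr ⟨-1, by ring⟩
    have f3 : B * ((S.val : ℕ) : ℤ) ≡ 1 ^ n * ((S.val : ℕ) : ℤ) [ZMOD ((n : ℤ) - 1)] :=
      (f2.pow n).mul_right _
    have hfin := (f1.sub f3).symm.trans h3m
    simpa using hfin
end

section
/- Let $G_1$ be a finite group, $G_2$ a finite abelian group, and $f_2 : G_2 \to G_1/[G_1,G_1]$ a surjective homomorphism. Let $G = \{(\sigma, \tau) \in G_1 \times G_2 : \pi(\sigma) = f_2(\tau)\}$ where $\pi$ is the abelianization map of $G_1$. Then the projection $G \to G_1$, $(\sigma,\tau) \mapsto \sigma$, is surjective, and the projection $G \to G_2$ induces an isomorphism $G/[G,G] \cong G_2$. -/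
open scoped commutatorElement

/-- For the fiber product `G` of a finite group `G₁` and a finite abelian group `G₂` over a
surjection `f₂ : G₂ → G₁^{ab}`, the projection to `G₁` is surjective and the projection to `G₂`
induces an isomorphism `G/[G,G] ≅ G₂`. -/
theorem stmt_17 {G₁ G₂ : Type*} [Group G₁] [Finite G₁] [CommGroup G₂] [Finite G₂]
    (f₂ : G₂ →* Abelianization G₁) (hf₂ : Function.Surjective f₂)
    (H : Subgroup (G₁ × G₂))
    (hH : ∀ p : G₁ × G₂, p ∈ H ↔ Abelianization.of p.1 = f₂ p.2) :
    Function.Surjective ((MonoidHom.fst G₁ G₂).comp H.subtype) ∧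
      Function.Bijective (Abelianization.lift ((MonoidHom.snd G₁ G₂).comp H.subtype)) := by
  have hofsurj : Function.Surjective (Abelianization.of : G₁ →* Abelianization G₁) :=
    Quotient.exists_rep
  constructor
  · intro σ
    obtain ⟨τ, hτ⟩ := hf₂ (Abelianization.of σ)
    exact ⟨⟨(σ, τ), (hH _).mpr hτ.symm⟩, rfl⟩
  constructor
  · -- injectivity
    set ψ := Abelianization.lift ((MonoidHom.snd G₁ G₂).comp H.subtype)
    -- key claim: elements of H of the form (σ, 1) map to 1 in Abelianization H
    have key : ∀ σ : G₁, σ ∈ commutator G₁ →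
        ∃ hm : ((σ, (1 : G₂)) : G₁ × G₂) ∈ H,
          Abelianization.of (⟨(σ, 1), hm⟩ : H) = 1 := by
      intro σ hσ
      rw [commutator_eq_closure] at hσ
      induction hσ using Subgroup.closure_induction with
      | mem x hx =>
        obtain ⟨a, b, rfl⟩ := hx
        obtain ⟨τa, hτa⟩ := hf₂ (Abelianization.of a)
        obtain ⟨τb, hτb⟩ := hf₂ (Abelianization.of b)
        have ha : ((a, τa) : G₁ × G₂) ∈ H := (hH _).mpr hτa.symm
        have hb : ((b, τb) : G₁ × G₂) ∈ H := (hH _).mpr hτb.symm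
        have hcomm : ⁅((a, τa) : G₁ × G₂), (b, τb)⁆ = (⁅a, b⁆, (1 : G₂)) := by
          simp [commutatorElement_def, mul_comm, mul_assoc, Prod.ext_iff, mul_inv_cancel_comm]
        have hm : ((⁅a, b⁆, (1 : G₂)) : G₁ × G₂) ∈ H := by
          rw [← hcomm, commutatorElement_def]
          exact H.mul_mem (H.mul_mem (H.mul_mem ha hb) (H.inv_mem ha)) (H.inv_mem hb)
        refine ⟨hm, ?_⟩
        have : (⟨(⁅a, b⁆, 1), hm⟩ : H) = ⁅(⟨(a, τa), ha⟩ : H), ⟨(b, τb), hb⟩⁆ := by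
          ext <;> simp [hcomm, commutatorElement_def]
        rw [this, map_commutatorElement]
        exact commutatorElement_eq_one_iff_commute.mpr (mul_comm _ _)
      | one =>
        refine ⟨H.one_mem, ?_⟩
        have : (⟨((1 : G₁), (1 : G₂)), H.one_mem⟩ : H) = 1 := rfl
        rw [this, map_one]
      | mul x y _ _ ihx ihy =>
        obtain ⟨hmx, hx1⟩ := ihx
        obtain ⟨hmy, hy1⟩ := ihy
        have hm : ((x * y, (1 : G₂)) : G₁ × G₂) ∈ H := by
          have := H.mul_mem hmx hmy
          simpa using this
        refine ⟨hm, ?_⟩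
        have : (⟨(x * y, 1), hm⟩ : H) = (⟨(x, 1), hmx⟩ : H) * ⟨(y, 1), hmy⟩ := by
          ext <;> simp
        rw [this, map_mul, hx1, hy1, one_mul]
      | inv x _ ihx =>
        obtain ⟨hmx, hx1⟩ := ihx
        have hm : ((x⁻¹, (1 : G₂)) : G₁ × G₂) ∈ H := by
          have := H.inv_mem hmx
          simpa using this
        refine ⟨hm, ?_⟩
        have : (⟨(x⁻¹, 1), hm⟩ : H) = (⟨(x, 1), hmx⟩ : H)⁻¹ := by
          ext <;> simp
        rw [this, map_inv, hx1, inv_one]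
    have hker : ∀ a : Abelianization H, ψ a = 1 → a = 1 := by
      intro a ha
      obtain ⟨x, rfl⟩ : ∃ x : H, Abelianization.of x = a := Quotient.exists_rep a
      have hx2 : (x : G₁ × G₂).2 = 1 := ha
      have hx1 : Abelianization.of (x : G₁ × G₂).1 = 1 := by
        have := (hH x).mp x.2
        rw [hx2, map_one] at this
        exact this
      have hxc : (x : G₁ × G₂).1 ∈ commutator G₁ := by
        exact (QuotientGroup.eq_one_iff _).mp hx1
      obtain ⟨hm, h1⟩ := key _ hxc
      have : x = ⟨((x : G₁ × G₂).1, 1), hm⟩ := by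
        ext
        · rfl
        · exact hx2
      rw [this, h1]
    intro a b hab
    have : ψ (a * b⁻¹) = 1 := by rw [map_mul, map_inv, hab, mul_inv_cancel]
    exact mul_inv_eq_one.mp (hker _ this)
  · -- surjectivity
    intro τ
    obtain ⟨σ, hσ⟩ := hofsurj (f₂ τ)
    exact ⟨Abelianization.of ⟨(σ, τ), (hH _).mpr hσ⟩, rfl⟩
end
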